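/- Let A be an algebra and V an object in a strict monoidal category, and let ψ : V ⊗ A → A ⊗ V be a morphism satisfying the twisted multiplicativity condition (μ_A ⊗ V) ∘ (A ⊗ ψ) ∘ (ψ ⊗ A) = ψ ∘ (V ⊗ μ_A). Then the morphism ∇ = (μ_A ⊗ V) ∘ (A ⊗ ψ) ∘ (A ⊗ V ⊗ η_A) : A ⊗ V → A ⊗ V is idempotent, i.e. ∇ ∘ ∇ = ∇. -/

import Mathlib

open TensorProduct

variable {R A V : Type*} [CommRing R] [Ring A] [Algebra R A]
  [AddCommGroup V] [Module R V]

/-- (μ_A ⊗ V) ∘ (A ⊗ ψ) ∘ (ψ ⊗ A) : (V ⊗ A) ⊗ A → A ⊗ V -/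
noncomputable def psiMulLHS (ψ : V ⊗[R] A →ₗ[R] A ⊗[R] V) :
    (V ⊗[R] A) ⊗[R] A →ₗ[R] A ⊗[R] V :=
  TensorProduct.map (LinearMap.mul' R A) LinearMap.id
    ∘ₗ (TensorProduct.assoc R A A V).symm.toLinearMap
    ∘ₗ LinearMap.lTensor A ψ
    ∘ₗ (TensorProduct.assoc R A V A).toLinearMap
    ∘ₗ LinearMap.rTensor A ψ

/-- ψ ∘ (V ⊗ μ_A) : (V ⊗ A) ⊗ A → A ⊗ V -/
noncomputable def psiMulRHS (ψ : V ⊗[R] A →ₗ[R] A ⊗[R] V) :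
    (V ⊗[R] A) ⊗[R] A →ₗ[R] A ⊗[R] V :=
  ψ ∘ₗ LinearMap.lTensor V (LinearMap.mul' R A)
    ∘ₗ (TensorProduct.assoc R V A A).toLinearMap

/-- ∇ = (μ_A ⊗ V) ∘ (A ⊗ ψ) ∘ (A ⊗ V ⊗ η_A) : A ⊗ V → A ⊗ V -/
noncomputable def nabla (ψ : V ⊗[R] A →ₗ[R] A ⊗[R] V) :
    A ⊗[R] V →ₗ[R] A ⊗[R] V :=
  TensorProduct.map (LinearMap.mul' R A) LinearMap.id
    ∘ₗ (TensorProduct.assoc R A A V).symm.toLinearMap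
    ∘ₗ LinearMap.lTensor A ψ
    ∘ₗ LinearMap.lTensor A ((TensorProduct.mk R V A).flip 1)

/-!
∇ is left A-linear and ∇(a ⊗ v) = a · ψ(v ⊗ 1). Evaluating the twisted multiplicativity
condition at x ⊗ 1 gives ∇ ∘ ψ = ψ, hence
∇(∇(a ⊗ v)) = a · ∇(ψ(v ⊗ 1)) = a · ψ(v ⊗ 1) = ∇(a ⊗ v).
-/

section General

variable {S B M N P : Type*} [CommSemiring S] [Semiring B] [Algebra S B]
  [AddCommMonoid M] [Module S M] [AddCommMonoid N] [Module S N] [AddCommMonoid P] [Module S P]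

theorem TensorProduct.assoc_tmul_eq_lTensor (y : M ⊗[S] N) (p : P) :
    TensorProduct.assoc S M N P (y ⊗ₜ p) =
      LinearMap.lTensor M ((TensorProduct.mk S N P).flip p) y := by
  induction y using TensorProduct.induction_on with
  | zero => simp
  | tmul m n => rfl
  | add y z hy hz => simp only [add_tmul, map_add, hy, hz]

theorem TensorProduct.map_mul'_assoc_symm_tmul (b : B) (x : B ⊗[S] M) :
    TensorProduct.map (LinearMap.mul' S B) LinearMap.id
      ((TensorProduct.assoc S B B M).symm (b ⊗ₜ x)) = b • x := by
  induction x using TensorProduct.induction_on with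
  | zero => simp
  | tmul c m => simp [smul_tmul']
  | add x y hx hy => simp only [tmul_add, map_add, hx, hy, smul_add]

theorem TensorProduct.lTensor_mul'_assoc_tmul_one (x : M ⊗[S] B) :
    LinearMap.lTensor M (LinearMap.mul' S B) (TensorProduct.assoc S M B B (x ⊗ₜ 1)) = x := by
  induction x using TensorProduct.induction_on with
  | zero => simp
  | tmul m b => simp
  | add x y hx hy => simp only [add_tmul, map_add, hx, hy]

end General

section Nabla

variable (ψ : V ⊗[R] A →ₗ[R] A ⊗[R] V)

theorem nabla_tmul (a : A) (v : V) : nabla ψ (a ⊗ₜ v) = a • ψ (v ⊗ₜ 1) := by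
  simp [nabla, TensorProduct.map_mul'_assoc_symm_tmul]

theorem nabla_smul (a : A) (x : A ⊗[R] V) : nabla ψ (a • x) = a • nabla ψ x := by
  induction x using TensorProduct.induction_on with
  | zero => simp
  | tmul b v => simp only [smul_tmul', smul_eq_mul, nabla_tmul, mul_smul]
  | add x y hx hy => simp only [smul_add, map_add, hx, hy]

theorem psiMulLHS_tmul_one (x : V ⊗[R] A) : psiMulLHS ψ (x ⊗ₜ 1) = nabla ψ (ψ x) := by
  simp [psiMulLHS, nabla, TensorProduct.assoc_tmul_eq_lTensor]

theorem psiMulRHS_tmul_one (x : V ⊗[R] A) : psiMulRHS ψ (x ⊗ₜ 1) = ψ x := by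
  simp [psiMulRHS, TensorProduct.lTensor_mul'_assoc_tmul_one]

theorem nabla_apply_psi (hψ : psiMulLHS ψ = psiMulRHS ψ) (x : V ⊗[R] A) :
    nabla ψ (ψ x) = ψ x := by
  rw [← psiMulLHS_tmul_one, hψ, psiMulRHS_tmul_one]

end Nabla

theorem nabla_idempotent (ψ : V ⊗[R] A →ₗ[R] A ⊗[R] V)
    (hψ : psiMulLHS ψ = psiMulRHS ψ) :
    nabla ψ ∘ₗ nabla ψ = nabla ψ := by
  refine TensorProduct.ext' fun a v => ?_
  rw [LinearMap.comp_apply, nabla_tmul, nabla_smul, nabla_apply_psi ψ hψ]
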